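/- arXiv:math/9912034 — 5 statements merged into one kernel-verified Lean document; each statement's English description precedes it below -/
import Mathlib

section
/- For every integer k ≥ 0, the sum over pairs of integers 0 ≤ i ≤ j ≤ k+1 of (-1)^i · binomial(k+1-i, j-i) equals (2^(k+2) - (-1)^(k+2))/3. -/
lemma geom_alt (n : ℕ) :
    ∑ i ∈ Finset.range n, ((-1 : ℚ) ^ i * 2 ^ (n - 1 - i)) =
      (2 ^ n - (-1) ^ n) / 3 := by
  induction n with
  | zero => simp
  | succ m ih =>
      rw [Finset.sum_range_succ]
      have h : ∀ i ∈ Finset.range m, ((-1 : ℚ) ^ i * 2 ^ (m + 1 - 1 - i))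
          = 2 * ((-1 : ℚ) ^ i * 2 ^ (m - 1 - i)) := by
        intro i hi
        rw [Finset.mem_range] at hi
        have : m + 1 - 1 - i = (m - 1 - i) + 1 := by omega
        rw [this]; ring
      rw [Finset.sum_congr rfl h, ← Finset.mul_sum, ih]
      simp only [Nat.add_sub_cancel, Nat.sub_self, pow_zero, mul_one, pow_succ]
      ring

theorem sum_binomial_alternating (k : ℕ) :
    ∑ j ∈ Finset.range (k + 2), ∑ i ∈ Finset.range (j + 1),
      ((-1 : ℚ) ^ i * (Nat.choose (k + 1 - i) (j - i) : ℚ)) =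
    (2 ^ (k + 2) - (-1) ^ (k + 2)) / 3 := by
  have swap := Finset.sum_Ico_Ico_comm 0 (k + 2)
    (fun i j => ((-1 : ℚ) ^ i * (Nat.choose (k + 1 - i) (j - i) : ℚ)))
  simp only [Nat.Ico_zero_eq_range] at swap
  rw [← swap]
  have hinner : ∀ i ∈ Finset.range (k + 2),
      (∑ j ∈ Finset.Ico i (k + 2), ((-1 : ℚ) ^ i * (Nat.choose (k + 1 - i) (j - i) : ℚ)))
      = (-1 : ℚ) ^ i * 2 ^ (k + 1 - i) := by
    intro i hi
    rw [Finset.mem_range] at hi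
    rw [← Finset.mul_sum, Finset.sum_Ico_eq_sum_range]
    have h1 : k + 2 - i = (k + 1 - i) + 1 := by omega
    have h2 : ∀ d, i + d - i = d := fun d => by omega
    simp only [h1, h2]
    rw [← Nat.cast_sum, Nat.sum_range_choose]
    push_cast
    ring
  rw [Finset.sum_congr rfl hinner]
  have := geom_alt (k + 2)
  simpa using this
end

section
/- Let m ≥ 1 and let Y be the m × m matrix whose (p, q) entry is 1/(p - q + 1)! for p - q + 1 ≥ 0 and 0 otherwise (so Y has entries 1 on the diagonal, 1 on the superdiagonal, and 1/(p-q+1)! below). Then det Y = 1/m!. -/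
/-!
Scaling row `p` of `Y` by `(p + 1)!` and column `q` by `1 / q!` turns it into the binomial matrix
`(p + 1).choose q`, and Pascal's rule `(p + 1).choose q = p.choose q + p.choose (q - 1)` factors that
into a lower and an upper triangular matrix. Undoing the scaling gives `Y = L * U` with
`L p k = 1 / ((p + 1) * (p - k)!)` for `k ≤ p` and `U` upper bidiagonal with diagonal `1` and
`U k (k + 1) = k + 1`. Hence `det Y = ∏ p, 1 / (p + 1) = 1 / m!`.
-/

open Finset Nat

namespace Matrix

variable (K : Type*) [Field K]

def factorialHessenberg (m : ℕ) : Matrix (Fin m) (Fin m) K :=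
  of fun p q => if (q : ℕ) ≤ (p : ℕ) + 1 then 1 / ((p + 1 - q : ℕ)! : K) else 0

def factorialHessenbergLower (m : ℕ) : Matrix (Fin m) (Fin m) K :=
  of fun p k => if (k : ℕ) ≤ p then 1 / (((p : ℕ) + 1) * (p - k : ℕ)! : K) else 0

def factorialHessenbergUpper (m : ℕ) : Matrix (Fin m) (Fin m) K :=
  of fun k q => if (q : ℕ) = k then 1 else if (q : ℕ) = k + 1 then (q : K) else 0

variable {K}

theorem mul_factorialHessenbergUpper_apply {m : ℕ} (A : Matrix (Fin m) (Fin m) K) (p q : Fin m) :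
    (A * factorialHessenbergUpper K m) p q =
      A p q + if (q : ℕ) = 0 then 0 else (q : K) * A p ⟨q - 1, by omega⟩ := by
  have hsplit : ∀ k : Fin m, factorialHessenbergUpper K m k q =
      (if k = q then 1 else 0) + if (q : ℕ) = k + 1 then (q : K) else 0 := by
    intro k
    by_cases hkq : k = q
    · subst hkq
      simp [factorialHessenbergUpper]
    · simp [factorialHessenbergUpper, hkq, Fin.val_ne_of_ne (Ne.symm hkq)]
  simp only [mul_apply, hsplit, mul_add, sum_add_distrib, mul_ite, mul_one, mul_zero,
    sum_ite_eq', mem_univ, if_true]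
  split_ifs with hq
  · rw [sum_eq_zero fun (k : Fin m) _ => if_neg (by omega : ¬(q : ℕ) = k + 1)]
  · rw [sum_eq_single_of_mem ⟨q - 1, by have := q.isLt; omega⟩ (mem_univ _) fun k _ hk =>
      if_neg fun h => hk (Fin.ext (by simp only; omega)), if_pos (by simp only; omega), mul_comm]

theorem inv_factorial_add_inv_factorial_succ [CharZero K] (n j : ℕ) :
    1 / ((n + j + 1 : K) * n !) + (j : K) / ((n + j + 1) * (n + 1)!) = 1 / (n + 1)! := by
  have : (n + j + 1 : K) ≠ 0 := by norm_cast
  rw [factorial_succ]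
  push_cast
  field_simp
  ring

theorem factorialHessenbergLower_mul_upper [CharZero K] (m : ℕ) :
    factorialHessenbergLower K m * factorialHessenbergUpper K m = factorialHessenberg K m := by
  ext ⟨p, hp⟩ ⟨q, hq⟩
  rw [mul_factorialHessenbergUpper_apply]
  simp only [factorialHessenbergLower, factorialHessenberg, of_apply]
  rcases q with _ | j
  · simp [factorial_succ]
  rcases lt_trichotomy j p with hjp | rfl | hpj
  · obtain ⟨n, rfl⟩ : ∃ n, p = n + (j + 1) := ⟨p - (j + 1), by omega⟩
    rw [if_pos (by omega), if_neg (by omega), if_pos (by omega), if_pos (by omega),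
      show n + (j + 1) - (j + 1) = n by omega, show n + (j + 1) - (j + 1 - 1) = n + 1 by omega,
      show n + (j + 1) + 1 - (j + 1) = n + 1 by omega,
      ← inv_factorial_add_inv_factorial_succ (K := K) n (j + 1)]
    push_cast
    ring
  · simp [Nat.cast_add_one_ne_zero]
  · rw [if_neg (by omega), if_neg (by omega), if_neg (by omega), if_neg (by omega)]
    simp

theorem det_factorialHessenbergUpper (m : ℕ) : (factorialHessenbergUpper K m).det = 1 := by
  rw [det_of_isUpperTriangular]
  · exact prod_eq_one fun i _ => by simp [factorialHessenbergUpper]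
  · intro i j (hij : j < i)
    simp only [factorialHessenbergUpper, of_apply]
    rw [if_neg (by omega), if_neg (by omega)]

theorem det_factorialHessenbergLower (m : ℕ) :
    (factorialHessenbergLower K m).det = 1 / (m ! : K) := by
  rw [det_of_isLowerTriangular]
  · simp only [factorialHessenbergLower, of_apply, le_refl, if_true, Nat.sub_self,
      factorial_zero, Nat.cast_one, mul_one]
    rw [Fin.prod_univ_eq_prod_range (fun p => 1 / ((p : K) + 1)) m,
      ← prod_range_add_one_eq_factorial]
    push_cast
    simp [prod_inv_distrib]
  · intro i j (hij : i < j)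
    simp only [factorialHessenbergLower, of_apply]
    rw [if_neg (by omega)]

theorem det_factorialHessenberg [CharZero K] (m : ℕ) :
    (factorialHessenberg K m).det = 1 / (m ! : K) := by
  rw [← factorialHessenbergLower_mul_upper, det_mul, det_factorialHessenbergUpper,
    det_factorialHessenbergLower, mul_one]

end Matrix

theorem det_factorial_matrix_general (m : ℕ) :
    Matrix.det (fun p q : Fin m =>
      if (q : ℕ) ≤ (p : ℕ) + 1 then
        (1 : ℚ) / (Nat.factorial ((p : ℕ) + 1 - (q : ℕ)) : ℚ)
      else 0) = 1 / (Nat.factorial m : ℚ) :=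
  Matrix.det_factorialHessenberg m

theorem det_factorial_matrix (m : ℕ) (hm : 1 ≤ m) :
    Matrix.det (fun p q : Fin m =>
      if (q : ℕ) ≤ (p : ℕ) + 1 then
        (1 : ℚ) / (Nat.factorial ((p : ℕ) + 1 - (q : ℕ)) : ℚ)
      else 0) = 1 / (Nat.factorial m : ℚ) :=
  det_factorial_matrix_general m
end

section
/- Let V be a finite-dimensional complex vector space, k ≥ 2, and let A : Λ^k V → V be an alternating k-linear multiplication on V. If U ⊆ V is a (k-1)-dimensional subspace, then there exists a k-dimensional subspace W of V containing U that is a subalgebra, i.e., [w₁, ..., w_k] ∈ W for all w₁, ..., w_k ∈ W. -/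
set_option maxHeartbeats 1000000

open Module Submodule

theorem exists_subalgebra_dim_k_containing (V : Type*) [AddCommGroup V] [Module ℂ V]
    [FiniteDimensional ℂ V] (k : ℕ) (hk : 2 ≤ k) (hkV : k ≤ Module.finrank ℂ V)
    (A : AlternatingMap ℂ V V (Fin k)) (U : Submodule ℂ V)
    (hU : Module.finrank ℂ U = k - 1) :
    ∃ W : Submodule ℂ V, U ≤ W ∧ Module.finrank ℂ W = k ∧
      ∀ w : Fin k → V, (∀ i, w i ∈ W) → A w ∈ W := by
  classical
  obtain ⟨n, rfl⟩ : ∃ n, k = n + 1 := ⟨k - 1, by omega⟩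
  have hUn : Module.finrank ℂ U = n := by simpa using hU
  let bU : Basis (Fin n) ℂ U := (Module.finBasis ℂ U).reindex (finCongr hUn)
  set u : Fin n → V := fun i => (bU i : V) with hu
  have hspanU : span ℂ (Set.range u) = U := by
    have h1 : Set.range u = U.subtype '' Set.range bU := by
      rw [← Set.range_comp]; rfl
    rw [h1, ← Submodule.map_span, bU.span_eq, Submodule.map_top, Submodule.range_subtype]
  -- the linear map v ↦ A (u₁, ..., uₙ, v)
  set f : V →ₗ[ℂ] V := A.toMultilinearMap.toLinearMap (Fin.snoc u 0) (Fin.last n) with hfdef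
  have hf : ∀ x : V, f x = A (Fin.snoc u x) := by
    intro x
    show A.toMultilinearMap (Function.update (Fin.snoc u 0) (Fin.last n) x) = _
    rw [Fin.update_snoc_last]
    rfl
  have hfU : ∀ x ∈ U, f x ∈ U := by
    intro x hx
    have hx' : x ∈ span ℂ (Set.range u) := hspanU ▸ hx
    obtain ⟨c, rfl⟩ := (mem_span_range_iff_exists_fun ℂ).mp hx'
    have hz : f (∑ j, c j • u j) = 0 := by
      rw [map_sum]
      refine Finset.sum_eq_zero fun j _ => ?_
      rw [map_smul, hf]
      have : A (Fin.snoc u (u j)) = 0 := by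
        refine A.map_eq_zero_of_eq _ (i := j.castSucc) (j := Fin.last n) ?_
          (Fin.castSucc_lt_last j).ne
        simp
      rw [this, smul_zero]
    rw [hz]; exact U.zero_mem
  -- induced endomorphism of V ⧸ U
  set g : (V ⧸ U) →ₗ[ℂ] (V ⧸ U) := Submodule.mapQ U U f (fun x hx => hfU x hx) with hgdef
  have hqpos : 0 < Module.finrank ℂ (V ⧸ U) := by
    have := Submodule.finrank_quotient_add_finrank U
    omega
  haveI : Nontrivial (V ⧸ U) := Module.nontrivial_of_finrank_pos hqpos
  obtain ⟨μ, hμ⟩ := Module.End.exists_eigenvalue (g : Module.End ℂ (V ⧸ U))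
  obtain ⟨x, hx⟩ := hμ.exists_hasEigenvector
  obtain ⟨v, rfl⟩ := U.mkQ_surjective x
  have hvU : v ∉ U := by
    intro hv
    exact hx.right ((Submodule.Quotient.mk_eq_zero U).mpr hv)
  have hv0 : v ≠ 0 := fun h => hvU (h ▸ U.zero_mem)
  have heig : f v - μ • v ∈ U := by
    have h1 : g (U.mkQ v) = μ • U.mkQ v := hx.apply_eq_smul
    have h3 : g (U.mkQ v) = U.mkQ (f v) := by
      rw [hgdef, Submodule.mkQ_apply, Submodule.mapQ_apply, Submodule.mkQ_apply]
    have h2 : U.mkQ (f v - μ • v) = 0 := by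
      rw [map_sub, map_smul, ← h3, h1, sub_self]
    rwa [Submodule.mkQ_apply, Submodule.Quotient.mk_eq_zero] at h2
  set W : Submodule ℂ V := U ⊔ span ℂ {v} with hWdef
  have hUW : U ≤ W := le_sup_left
  have hvW : v ∈ W := Submodule.mem_sup_right (Submodule.mem_span_singleton_self v)
  -- dimension of W
  have hdimW : Module.finrank ℂ W = n + 1 := by
    have hdisj : U ⊓ span ℂ {v} = ⊥ :=
      ((Submodule.disjoint_span_singleton' hv0).mpr hvU).eq_bot
    have h := Submodule.finrank_sup_add_finrank_inf_eq U (span ℂ {v})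
    rw [hdisj, finrank_bot, finrank_span_singleton hv0, hUn] at h
    rw [hWdef]
    omega
  -- A b ∈ W where b is the basis family of W
  set b : Fin (n + 1) → V := Fin.snoc u v with hbdef
  have hbW : ∀ j, b j ∈ W := by
    intro j
    refine Fin.lastCases ?_ (fun i => ?_) j
    · simpa [hbdef] using hvW
    · have : u i ∈ U := by
        rw [← hspanU]; exact Submodule.subset_span ⟨i, rfl⟩
      simpa [hbdef] using hUW this
  have hAbW : A b ∈ W := by
    have h1 : A b = f v := (hf v).symm
    have h2 : f v = (f v - μ • v) + μ • v := by abel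
    rw [h1, h2]
    exact W.add_mem (hUW heig) (W.smul_mem μ hvW)
  have hWspan : W = span ℂ (Set.range b) := by
    have hrb : Set.range b = Set.range u ∪ {v} := by
      ext y
      constructor
      · rintro ⟨j, rfl⟩
        refine Fin.lastCases ?_ (fun i => ?_) j
        · right; simp [hbdef]
        · left; exact ⟨i, by simp [hbdef]⟩
      · rintro (⟨i, rfl⟩ | rfl)
        · exact ⟨i.castSucc, by simp [hbdef]⟩
        · exact ⟨Fin.last n, by simp [hbdef]⟩
    rw [hrb, Submodule.span_union, hspanU, hWdef]
  refine ⟨W, hUW, hdimW, ?_⟩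
  intro w hw
  choose c hc using fun i =>
    (mem_span_range_iff_exists_fun ℂ).mp (hWspan ▸ hw i)
  have hw' : w = fun i => ∑ j, c i j • b j := by
    funext i; exact (hc i).symm
  rw [hw']
  have hms : A.toMultilinearMap (fun i => ∑ j, c i j • b j) =
      ∑ r : Fin (n + 1) → Fin (n + 1), A.toMultilinearMap fun i => c i (r i) • b (r i) :=
    A.toMultilinearMap.map_sum (fun i j => c i j • b j)
  show A.toMultilinearMap (fun i => ∑ j, c i j • b j) ∈ W
  rw [hms]
  refine Submodule.sum_mem W fun r _ => ?_
  have hterm : A.toMultilinearMap (fun i => c i (r i) • b (r i)) =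
      (∏ i, c i (r i)) • A (b ∘ r) :=
    A.toMultilinearMap.map_smul_univ (fun i => c i (r i)) (b ∘ r)
  rw [hterm]
  by_cases hr : Function.Injective r
  · have hbij : Function.Bijective r := (Finite.injective_iff_bijective).mp hr
    set σ : Equiv.Perm (Fin (n + 1)) := Equiv.ofBijective r hbij with hσ
    have hbr : b ∘ r = b ∘ σ := rfl
    rw [hbr, A.map_perm b σ]
    rcases Int.units_eq_one_or (Equiv.Perm.sign σ) with h | h
    · rw [h, one_smul]
      exact W.smul_mem _ hAbW
    · rw [h]
      simpa using W.smul_mem (∏ i, c i (r i)) (W.neg_mem hAbW)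
  · have : ¬ Function.Injective (b ∘ r) := fun h =>
      hr (fun i j hij => h (by simp [Function.comp, hij]))
    rw [A.map_eq_zero_of_not_injective _ this, smul_zero]
    exact W.zero_mem
end

section
/- Let A be a 4-dimensional complex anticommutative algebra, v ∈ A a nonzero vector spanning a line U, and suppose the induced operator [v,·] on A/U is a homothety (scalar multiple of the identity). Then every vector w ∈ A lies in some 3-dimensional subalgebra of A. -/
open Submodule Module

private lemma aux_mul_self {A : Type*} [AddCommGroup A] [Module ℂ A]
    (mul : A →ₗ[ℂ] A →ₗ[ℂ] A) (anticomm : ∀ x y : A, mul x y = -mul y x) (x : A) :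
    mul x x = 0 := by
  have h := anticomm x x
  have h2 : (2 : ℂ) • mul x x = 0 := by
    rw [two_smul]
    nth_rewrite 2 [h]
    abel
  rcases smul_eq_zero.mp h2 with h' | h'
  · exact absurd h' (by norm_num)
  · exact h'

private lemma aux_finrank_sup {A : Type*} [AddCommGroup A] [Module ℂ A]
    [FiniteDimensional ℂ A] (p : Submodule ℂ A) (z : A) (hz : z ∉ p) :
    Module.finrank ℂ ↥(p ⊔ Submodule.span ℂ {z}) = Module.finrank ℂ p + 1 := by
  have hzne : z ≠ 0 := fun h => hz (h ▸ p.zero_mem)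
  have hinf : p ⊓ Submodule.span ℂ {z} = ⊥ := by
    rw [eq_bot_iff]
    rintro x ⟨hxp, hxz⟩
    obtain ⟨a, rfl⟩ := Submodule.mem_span_singleton.mp hxz
    rcases eq_or_ne a 0 with rfl | ha
    · simp
    · exact absurd ((p.smul_mem_iff ha).mp hxp) hz
  have := Submodule.finrank_sup_add_finrank_inf_eq p (Submodule.span ℂ {z})
  rw [hinf, finrank_bot, finrank_span_singleton hzne] at this
  omega

theorem every_vector_in_three_dim_subalgebra (A : Type*) [AddCommGroup A]
    [Module ℂ A] [FiniteDimensional ℂ A] (hA : Module.finrank ℂ A = 4)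
    (mul : A →ₗ[ℂ] A →ₗ[ℂ] A) (anticomm : ∀ x y : A, mul x y = -mul y x)
    (v : A) (hv : v ≠ 0)
    (hhom : ∃ c : ℂ, ∀ x : A, mul v x - c • x ∈ Submodule.span ℂ {v}) :
    ∀ w : A, ∃ S : Submodule ℂ A, Module.finrank ℂ S = 3 ∧ w ∈ S ∧
      ∀ x ∈ S, ∀ y ∈ S, mul x y ∈ S := by
  obtain ⟨c, hc⟩ := hhom
  intro w
  -- choose w' not in span{v} with w ∈ span{v} ⊔ span{w'}
  obtain ⟨w', hw', hwmem⟩ :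
      ∃ w' : A, w' ∉ Submodule.span ℂ {v} ∧
        w ∈ Submodule.span ℂ {v} ⊔ Submodule.span ℂ {w'} := by
    by_cases hw : w ∈ Submodule.span ℂ {v}
    · have : Submodule.span ℂ ({v} : Set A) ≠ ⊤ := by
        intro h
        have h1 : Module.finrank ℂ (Submodule.span ℂ ({v} : Set A)) = 1 :=
          finrank_span_singleton hv
        rw [h, finrank_top] at h1
        omega
      obtain ⟨w', hw'⟩ : ∃ w', w' ∉ Submodule.span ℂ ({v} : Set A) := by
        by_contra h; push_neg at h
        exact this (Submodule.eq_top_iff'.mpr h)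
      exact ⟨w', hw', Submodule.mem_sup_left hw⟩
    · exact ⟨w, hw, Submodule.mem_sup_right (Submodule.mem_span_singleton_self w)⟩
  set W : Submodule ℂ A := Submodule.span ℂ {v} ⊔ Submodule.span ℂ {w'} with hW
  have hvW : v ∈ W := Submodule.mem_sup_left (Submodule.mem_span_singleton_self v)
  have hw'W : w' ∈ W := Submodule.mem_sup_right (Submodule.mem_span_singleton_self w')
  have hWrank : Module.finrank ℂ W = 2 := by
    rw [hW, aux_finrank_sup _ _ hw', finrank_span_singleton hv]
  -- mul v w' ∈ W
  have hvw' : mul v w' ∈ W := by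
    have := hc w'
    have : mul v w' = (mul v w' - c • w') + c • w' := by abel
    rw [this]
    exact W.add_mem (Submodule.mem_sup_left (hc w')) (W.smul_mem _ hw'W)
  -- W is invariant under mul w'
  have hWinv : W ≤ W.comap (mul w') := by
    rw [hW, sup_le_iff]
    constructor <;> rw [Submodule.span_le, Set.singleton_subset_iff] <;>
      simp only [SetLike.mem_coe, Submodule.mem_comap]
    · rw [anticomm w' v]
      exact W.neg_mem hvw'
    · rw [aux_mul_self mul anticomm w']
      exact W.zero_mem
  -- the quotient A ⧸ W
  have hQrank : Module.finrank ℂ (A ⧸ W) = 2 := by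
    have := Submodule.finrank_quotient_add_finrank W
    rw [hWrank, hA] at this
    omega
  have : Nontrivial (A ⧸ W) := Module.nontrivial_of_finrank_pos (R := ℂ) (M := A ⧸ W) (by omega)
  -- induced endomorphism and eigenvector
  set f : Module.End ℂ (A ⧸ W) := Submodule.mapQ W W (mul w') hWinv with hf
  obtain ⟨μ, hμ⟩ := Module.End.exists_eigenvalue f
  obtain ⟨zbar, hzbar⟩ := hμ.exists_hasEigenvector
  obtain ⟨z, rfl⟩ := Submodule.mkQ_surjective W zbar
  have hzW : z ∉ W := by
    intro h
    exact hzbar.2 ((Submodule.Quotient.mk_eq_zero W).mpr h)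
  have hw'z : mul w' z - μ • z ∈ W := by
    have h1 : f (W.mkQ z) = μ • W.mkQ z := hzbar.apply_eq_smul
    rw [hf] at h1
    have h1' : W.mkQ (mul w' z) = μ • W.mkQ z := by
      simpa [Submodule.mkQ_apply, Submodule.mapQ_apply] using h1
    have h2 : W.mkQ (mul w' z - μ • z) = 0 := by
      rw [map_sub, map_smul, h1']; abel
    exact (Submodule.Quotient.mk_eq_zero W).mp h2
  -- the subalgebra S
  refine ⟨W ⊔ Submodule.span ℂ {z}, ?_, Submodule.mem_sup_left hwmem, ?_⟩
  · rw [aux_finrank_sup _ _ hzW, hWrank]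
  · set S : Submodule ℂ A := W ⊔ Submodule.span ℂ {z} with hS
    have hWS : W ≤ S := le_sup_left
    have hvS : v ∈ S := hWS hvW
    have hw'S : w' ∈ S := hWS hw'W
    have hzS : z ∈ S := Submodule.mem_sup_right (Submodule.mem_span_singleton_self z)
    have hSspan : S = Submodule.span ℂ ({v, w', z} : Set A) := by
      rw [hS, hW]
      rw [Submodule.span_insert, Submodule.span_insert]
      rw [sup_assoc]
    -- products of generators
    have hvz : mul v z ∈ S := by
      have : mul v z = (mul v z - c • z) + c • z := by abel
      rw [this]
      exact S.add_mem (hWS (Submodule.mem_sup_left (hc z))) (S.smul_mem _ hzS)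
    have hvw'S : mul v w' ∈ S := hWS hvw'
    have hw'zS : mul w' z ∈ S := by
      have : mul w' z = (mul w' z - μ • z) + μ • z := by abel
      rw [this]
      exact S.add_mem (hWS hw'z) (S.smul_mem _ hzS)
    -- closure for generators on the left
    have hgen : ∀ g ∈ ({v, w', z} : Set A), ∀ y ∈ S, mul g y ∈ S := by
      intro g hg y hy
      have key : Submodule.span ℂ ({v, w', z} : Set A) ≤ S.comap (mul g) := by
        rw [Submodule.span_le]
        rintro x (rfl | rfl | rfl) <;>
          simp only [SetLike.mem_coe, Submodule.mem_comap] <;>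
          rcases hg with rfl | rfl | rfl
        · rw [aux_mul_self mul anticomm]; exact S.zero_mem
        · rw [anticomm]; exact S.neg_mem hvw'S
        · rw [anticomm]; exact S.neg_mem hvz
        · exact hvw'S
        · rw [aux_mul_self mul anticomm]; exact S.zero_mem
        · rw [anticomm]; exact S.neg_mem hw'zS
        · exact hvz
        · exact hw'zS
        · rw [aux_mul_self mul anticomm]; exact S.zero_mem
      exact (hSspan.le.trans key) hy
    -- closure in general
    intro x hx y hy
    have key : Submodule.span ℂ ({v, w', z} : Set A) ≤ S.comap (mul.flip y) := by
      rw [Submodule.span_le]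
      rintro g (rfl | rfl | rfl) <;>
        simp only [SetLike.mem_coe, Submodule.mem_comap, LinearMap.flip_apply]
      · exact hgen g (by simp) y hy
      · exact hgen g (by simp) y hy
      · exact hgen g (by simp) y hy
    have := (hSspan.le.trans key) hx
    simpa using this
end

section
/- Let A be a 4-dimensional complex anticommutative algebra with exactly five 3-dimensional subalgebras S₁,...,S₅, and suppose that for some three of them the intersection S₁ ∩ S₂ ∩ S₃ is 2-dimensional. Then A has infinitely many 3-dimensional subalgebras — a contradiction. Formally: if S₁ ∩ S₂ ∩ S₃ = U with dim U = 2 and S₁, S₂, S₃ are distinct 3-dimensional subalgebras, then every 3-dimensional subspace of A containing U is a subalgebra. -/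
open Module Submodule

lemma three_lines_scalar {V : Type*} [AddCommGroup V] [Module ℂ V] [FiniteDimensional ℂ V]
    (hV : Module.finrank ℂ V = 2) (g : V →ₗ[ℂ] V)
    (T₁ T₂ T₃ : Submodule ℂ V)
    (d₁ : Module.finrank ℂ T₁ = 1) (d₂ : Module.finrank ℂ T₂ = 1)
    (d₃ : Module.finrank ℂ T₃ = 1)
    (ne₁₂ : T₁ ≠ T₂) (ne₁₃ : T₁ ≠ T₃) (ne₂₃ : T₂ ≠ T₃)
    (inv₁ : ∀ t ∈ T₁, g t ∈ T₁) (inv₂ : ∀ t ∈ T₂, g t ∈ T₂)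
    (inv₃ : ∀ t ∈ T₃, g t ∈ T₃) :
    ∃ a : ℂ, ∀ x, g x = a • x := by
  -- generators
  have gen : ∀ T : Submodule ℂ V, Module.finrank ℂ T = 1 →
      ∃ v : V, v ≠ 0 ∧ T = span ℂ {v} := by
    intro T hT
    have hTbot : T ≠ ⊥ := by
      intro h
      rw [h, finrank_bot] at hT
      omega
    obtain ⟨v, hvT, hv0⟩ := Submodule.exists_mem_ne_zero_of_ne_bot hTbot
    refine ⟨v, hv0, ?_⟩
    have hle : span ℂ {v} ≤ T := span_le.mpr (by simpa using hvT)
    have hsp : Module.finrank ℂ (span ℂ {v}) = 1 := finrank_span_singleton hv0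
    exact (Submodule.eq_of_le_of_finrank_le hle (by rw [hT, hsp])).symm
  obtain ⟨v₁, hv₁0, hT₁⟩ := gen T₁ d₁
  obtain ⟨v₂, hv₂0, hT₂⟩ := gen T₂ d₂
  obtain ⟨v₃, hv₃0, hT₃⟩ := gen T₃ d₃
  -- T₁ ⊓ T₂ = ⊥
  have hinf : T₁ ⊓ T₂ = ⊥ := by
    by_contra h
    have h1 : Module.finrank ℂ (T₁ ⊓ T₂ : Submodule ℂ V) ≠ 0 := by
      rwa [ne_eq, Submodule.finrank_eq_zero]
    have h2 : T₁ ⊓ T₂ = T₁ :=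
      Submodule.eq_of_le_of_finrank_le inf_le_left (by omega)
    have h3 : T₁ ⊓ T₂ = T₂ :=
      Submodule.eq_of_le_of_finrank_le inf_le_right (by omega)
    exact ne₁₂ (h2 ▸ h3)
  have hsup : T₁ ⊔ T₂ = ⊤ := by
    have := Submodule.finrank_sup_add_finrank_inf_eq T₁ T₂
    rw [hinf, finrank_bot] at this
    exact Submodule.eq_top_of_finrank_eq (by omega)
  -- independence
  have indep : ∀ p q : ℂ, p • v₁ + q • v₂ = 0 → p = 0 ∧ q = 0 := by
    intro p q hpq
    have hm : p • v₁ ∈ T₁ ⊓ T₂ := by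
      constructor
      · exact Submodule.smul_mem _ _ (hT₁ ▸ Submodule.mem_span_singleton_self v₁)
      · have : p • v₁ = -(q • v₂) := by linear_combination (norm := module) hpq
        rw [this]
        exact Submodule.neg_mem _ (Submodule.smul_mem _ _
          (hT₂ ▸ Submodule.mem_span_singleton_self v₂))
    rw [hinf, Submodule.mem_bot] at hm
    have hp : p = 0 := by
      rcases smul_eq_zero.mp hm with h | h
      · exact h
      · exact absurd h hv₁0
    refine ⟨hp, ?_⟩
    rw [hp, zero_smul, zero_add] at hpq
    rcases smul_eq_zero.mp hpq with h | h
    · exact h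
    · exact absurd h hv₂0
  -- eigenvalues
  obtain ⟨a, ha⟩ := Submodule.mem_span_singleton.mp
    (hT₁ ▸ inv₁ v₁ (hT₁ ▸ Submodule.mem_span_singleton_self v₁))
  obtain ⟨b, hb⟩ := Submodule.mem_span_singleton.mp
    (hT₂ ▸ inv₂ v₂ (hT₂ ▸ Submodule.mem_span_singleton_self v₂))
  obtain ⟨c, hc⟩ := Submodule.mem_span_singleton.mp
    (hT₃ ▸ inv₃ v₃ (hT₃ ▸ Submodule.mem_span_singleton_self v₃))
  -- decompose v₃
  have hv₃mem : v₃ ∈ T₁ ⊔ T₂ := hsup ▸ Submodule.mem_top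
  obtain ⟨x, hx, y, hy, hxy⟩ := Submodule.mem_sup.mp hv₃mem
  obtain ⟨p, hp⟩ := Submodule.mem_span_singleton.mp (hT₁ ▸ hx)
  obtain ⟨q, hq⟩ := Submodule.mem_span_singleton.mp (hT₂ ▸ hy)
  have hv₃ : v₃ = p • v₁ + q • v₂ := by rw [← hxy, hp, hq]
  have hpne : p ≠ 0 := by
    intro h
    rw [h, zero_smul, zero_add] at hv₃
    have : v₃ ∈ T₂ := hv₃ ▸ Submodule.smul_mem _ _
      (hT₂ ▸ Submodule.mem_span_singleton_self v₂)
    have hle : T₃ ≤ T₂ := hT₃ ▸ span_le.mpr (by simpa using this)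
    exact ne₂₃ (Submodule.eq_of_le_of_finrank_le hle (by omega)).symm
  have hqne : q ≠ 0 := by
    intro h
    rw [h, zero_smul, add_zero] at hv₃
    have : v₃ ∈ T₁ := hv₃ ▸ Submodule.smul_mem _ _
      (hT₁ ▸ Submodule.mem_span_singleton_self v₁)
    have hle : T₃ ≤ T₁ := hT₃ ▸ span_le.mpr (by simpa using this)
    exact ne₁₃ (Submodule.eq_of_le_of_finrank_le hle (by omega)).symm
  -- a = b
  have hgv₃ : (p * a) • v₁ + (q * b) • v₂ = (c * p) • v₁ + (c * q) • v₂ := by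
    have h1 : g v₃ = p • g v₁ + q • g v₂ := by rw [hv₃]; simp [map_add, map_smul]
    rw [← ha, ← hb] at h1
    have h2 : c • v₃ = p • a • v₁ + q • b • v₂ := hc.trans h1
    rw [hv₃] at h2
    linear_combination (norm := module) -h2
  have hkey : (p * a - c * p) • v₁ + (q * b - c * q) • v₂ = 0 := by
    linear_combination (norm := module) hgv₃
  obtain ⟨e1, e2⟩ := indep _ _ hkey
  have hac : a = c := by
    have hpe : p * (a - c) = 0 := by linear_combination e1
    rcases mul_eq_zero.mp hpe with h | h
    · exact absurd h hpne
    · exact sub_eq_zero.mp h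
  have hbc : b = c := by
    have hqe : q * (b - c) = 0 := by linear_combination e2
    rcases mul_eq_zero.mp hqe with h | h
    · exact absurd h hqne
    · exact sub_eq_zero.mp h
  refine ⟨c, fun x => ?_⟩
  have hxmem : x ∈ T₁ ⊔ T₂ := hsup ▸ Submodule.mem_top
  obtain ⟨x', hx', y', hy', hxy'⟩ := Submodule.mem_sup.mp hxmem
  obtain ⟨p', hp'⟩ := Submodule.mem_span_singleton.mp (hT₁ ▸ hx')
  obtain ⟨q', hq'⟩ := Submodule.mem_span_singleton.mp (hT₂ ▸ hy')
  have hxd : x = p' • v₁ + q' • v₂ := by rw [← hxy', hp', hq']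
  have hgx : g x = p' • a • v₁ + q' • b • v₂ := by
    rw [hxd]; simp [map_add, map_smul, ← ha, ← hb]
  rw [hgx, hxd, hac, hbc]
  module

lemma mapQ_mkQ {A : Type*} [AddCommGroup A] [Module ℂ A]
    (U : Submodule ℂ A) (f : A →ₗ[ℂ] A) (hfU : U ≤ U.comap f) (x : A) :
    (U.mapQ U f hfU) (U.mkQ x) = U.mkQ (f x) := by
  rw [Submodule.mkQ_apply, Submodule.mapQ_apply, Submodule.mkQ_apply]

set_option maxHeartbeats 1000000 in
theorem triple_intersection_two_dim_gives_pencil (A : Type*) [AddCommGroup A]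
    [Module ℂ A] [FiniteDimensional ℂ A] (hA : Module.finrank ℂ A = 4)
    (mul : A →ₗ[ℂ] A →ₗ[ℂ] A) (anticomm : ∀ x y : A, mul x y = -mul y x)
    (S₁ S₂ S₃ : Submodule ℂ A)
    (h₁ : Module.finrank ℂ S₁ = 3) (h₂ : Module.finrank ℂ S₂ = 3)
    (h₃ : Module.finrank ℂ S₃ = 3)
    (hsub₁ : ∀ x ∈ S₁, ∀ y ∈ S₁, mul x y ∈ S₁)
    (hsub₂ : ∀ x ∈ S₂, ∀ y ∈ S₂, mul x y ∈ S₂)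
    (hsub₃ : ∀ x ∈ S₃, ∀ y ∈ S₃, mul x y ∈ S₃)
    (hne₁₂ : S₁ ≠ S₂) (hne₁₃ : S₁ ≠ S₃) (hne₂₃ : S₂ ≠ S₃)
    (U : Submodule ℂ A) (hU : U = S₁ ⊓ S₂ ⊓ S₃) (hUdim : Module.finrank ℂ U = 2) :
    ∀ S : Submodule ℂ A, U ≤ S → Module.finrank ℂ S = 3 →
      ∀ x ∈ S, ∀ y ∈ S, mul x y ∈ S := by
  have hU₁ : U ≤ S₁ := hU ▸ le_trans inf_le_left inf_le_left
  have hU₂ : U ≤ S₂ := hU ▸ le_trans inf_le_left inf_le_right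
  have hU₃ : U ≤ S₃ := hU ▸ inf_le_right
  have hUsub : ∀ x ∈ U, ∀ y ∈ U, mul x y ∈ U := by
    intro x hx y hy
    rw [hU]
    exact ⟨⟨hsub₁ x (hU₁ hx) y (hU₁ hy), hsub₂ x (hU₂ hx) y (hU₂ hy)⟩,
      hsub₃ x (hU₃ hx) y (hU₃ hy)⟩
  -- dimension of quotient
  have hQ : Module.finrank ℂ (A ⧸ U) = 2 := by
    have := Submodule.finrank_quotient_add_finrank U
    omega
  -- dimension of images in quotient
  have hTdim : ∀ S' : Submodule ℂ A, U ≤ S' → Module.finrank ℂ S' = 3 →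
      Module.finrank ℂ (S'.map U.mkQ) = 1 := by
    intro S' hle h3
    set ψ : S' →ₗ[ℂ] A ⧸ U := U.mkQ.comp S'.subtype with hψ
    have hrange : LinearMap.range ψ = S'.map U.mkQ := by
      rw [hψ, LinearMap.range_comp, Submodule.range_subtype]
    have hker : LinearMap.ker ψ = U.comap S'.subtype := by
      rw [hψ, LinearMap.ker_comp, Submodule.ker_mkQ]
    have hkerdim : Module.finrank ℂ (LinearMap.ker ψ) = 2 := by
      rw [hker, ← hUdim]
      exact (Submodule.comapSubtypeEquivOfLe hle).finrank_eq
    have hrn := LinearMap.finrank_range_add_finrank_ker ψ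
    rw [hrange, hkerdim, h3] at hrn
    omega
  -- distinctness of images
  have hcm : ∀ S' : Submodule ℂ A, U ≤ S' → (S'.map U.mkQ).comap U.mkQ = S' := by
    intro S' hle
    rw [Submodule.comap_map_mkQ, sup_eq_right.mpr hle]
  have hTne : ∀ Sa Sb : Submodule ℂ A, U ≤ Sa → U ≤ Sb → Sa ≠ Sb →
      Sa.map U.mkQ ≠ Sb.map U.mkQ := by
    intro Sa Sb ha hb hne h
    exact hne (by rw [← hcm Sa ha, ← hcm Sb hb, h])
  intro S hUS hSdim
  -- key: multiplication by elements of U preserves S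
  have key : ∀ v ∈ U, ∀ s ∈ S, mul v s ∈ S := by
    intro v hv
    have hfU : U ≤ U.comap (mul v) := fun u hu => hUsub v hv u hu
    have hinv : ∀ S' : Submodule ℂ A, U ≤ S' → (∀ x ∈ S', ∀ y ∈ S', mul x y ∈ S') →
        ∀ t ∈ S'.map U.mkQ, (U.mapQ U (mul v) hfU) t ∈ S'.map U.mkQ := by
      intro S' hle hs t ht
      obtain ⟨s, hsm, rfl⟩ := ht
      exact ⟨mul v s, hs v (hle hv) s hsm, (mapQ_mkQ U (mul v) hfU s).symm⟩
    obtain ⟨a, hga⟩ := three_lines_scalar hQ (U.mapQ U (mul v) hfU) (S₁.map U.mkQ) (S₂.map U.mkQ)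
      (S₃.map U.mkQ) (hTdim S₁ hU₁ h₁) (hTdim S₂ hU₂ h₂) (hTdim S₃ hU₃ h₃)
      (hTne S₁ S₂ hU₁ hU₂ hne₁₂) (hTne S₁ S₃ hU₁ hU₃ hne₁₃)
      (hTne S₂ S₃ hU₂ hU₃ hne₂₃)
      (hinv S₁ hU₁ hsub₁) (hinv S₂ hU₂ hsub₂) (hinv S₃ hU₃ hsub₃)
    intro s hs
    have h1 : U.mkQ (mul v s) = U.mkQ (a • s) := by
      rw [← mapQ_mkQ U (mul v) hfU s, hga, map_smul]
    have h2 : mul v s - a • s ∈ U := by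
      rw [← Submodule.ker_mkQ U, LinearMap.mem_ker, map_sub, h1, sub_self]
    have h3 : mul v s = (mul v s - a • s) + a • s := by abel
    rw [h3]
    exact Submodule.add_mem S (hUS h2) (Submodule.smul_mem S a hs)
  -- pick w with S = U ⊔ span {w}
  have hlt : U < S := lt_of_le_of_ne hUS (by intro h; rw [← h] at hSdim; omega)
  obtain ⟨w, hwS, hwU⟩ := SetLike.exists_of_lt hlt
  have hle : U ⊔ span ℂ {w} ≤ S := sup_le hUS (span_le.mpr (by simpa using hwS))
  have hltw : U < U ⊔ span ℂ {w} := by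
    refine lt_of_le_of_ne le_sup_left ?_
    intro h
    exact hwU (h ▸ Submodule.mem_sup_right (Submodule.mem_span_singleton_self w))
  have hdim3 : 3 ≤ Module.finrank ℂ (U ⊔ span ℂ {w} : Submodule ℂ A) := by
    have := Submodule.finrank_lt_finrank_of_lt hltw
    omega
  have hSeq : S = U ⊔ span ℂ {w} :=
    (Submodule.eq_of_le_of_finrank_le hle (by rw [hSdim]; exact hdim3)).symm
  -- mul w w = 0
  have hww : mul w w = 0 := by
    have h := anticomm w w
    have h2 : (2 : ℂ) • mul w w = 0 := by
      rw [two_smul]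
      linear_combination (norm := module) h
    rcases smul_eq_zero.mp h2 with h | h
    · norm_num at h
    · exact h
  intro x hx y hy
  have hxS := hx
  have hyS := hy
  rw [hSeq] at hx hy
  obtain ⟨u, hu, z, hz, hxe⟩ := Submodule.mem_sup.mp hx
  obtain ⟨u', hu', z', hz', hye⟩ := Submodule.mem_sup.mp hy
  obtain ⟨cx, hcx⟩ := Submodule.mem_span_singleton.mp hz
  obtain ⟨cy, hcy⟩ := Submodule.mem_span_singleton.mp hz'
  have hxd : x = u + cx • w := by rw [← hxe, hcx]
  have hyd : y = u' + cy • w := by rw [← hye, hcy]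
  have hmwy : mul w y ∈ S := by
    have : mul w y = -mul u' w + cy • mul w w := by
      rw [hyd, anticomm u' w]
      simp [map_add, map_smul]
    rw [this, hww, smul_zero, add_zero]
    exact Submodule.neg_mem S (key u' hu' w hwS)
  have hexp : mul x y = mul u y + cx • mul w y := by
    rw [hxd]
    simp [map_add, map_smul]
  rw [hexp]
  exact Submodule.add_mem S (key u hu y hyS) (Submodule.smul_mem S cx hmwy)
end
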